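/- Let f be a relation on (X,d) and define the Conley chain relation 𝒞_d f = {(x,y) : m_d^f(x,y) = 0}. Then m_d^{𝒞_d f} = m_d^f; in particular 𝒞_d(𝒞_d f) = 𝒞_d f (the Conley operator is idempotent). -/

import Mathlib

namespace ChainRec

variable {X : Type*}

/-- chain-length of a chain, with `x` the start point and `y` the end point.
For `c = [(a₁,b₁),…,(aₙ,bₙ)]` this is `d x a₁ + Σ d bᵢ a_{i+1} + d bₙ y`. -/
noncomputable def chainLen (d : X → X → ℝ) : X → X → List (X × X) → ℝ
  | x, y, [] => d x y
  | x, y, p :: t => d x p.1 + chainLen d p.2 y t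

/-- chain-bound of a chain: the max of all the gap distances. -/
noncomputable def chainBound (d : X → X → ℝ) : X → X → List (X × X) → ℝ
  | x, y, [] => d x y
  | x, y, p :: t => max (d x p.1) (chainBound d p.2 y t)

/-- The Aubry–Mather barrier function `ℓ_d^f`. -/
noncomputable def ell (d : X → X → ℝ) (f : Set (X × X)) (x y : X) : ℝ :=
  sInf { r | ∃ c : List (X × X), c ≠ [] ∧ (∀ p ∈ c, p ∈ f) ∧ r = chainLen d x y c }

/-- The Conley barrier function `m_d^f`. -/
noncomputable def mbar (d : X → X → ℝ) (f : Set (X × X)) (x y : X) : ℝ :=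
  sInf { r | ∃ c : List (X × X), c ≠ [] ∧ (∀ p ∈ c, p ∈ f) ∧ r = chainBound d x y c }

/-- The Conley chain relation `𝒞_d f`. -/
def conleyRel (d : X → X → ℝ) (f : Set (X × X)) : Set (X × X) :=
  { p | mbar d f p.1 p.2 = 0 }

/-! Every link of a chain in `𝒞_d f` can be replaced by a chain in `f` of arbitrarily small
chain-bound; by the triangle inequality each replacement perturbs the neighbouring gaps by at most
that bound, so chains in `𝒞_d f` are approximated by chains in `f`. Hence `m_d^f ≤ m_d^{𝒞_d f}`,
and the reverse inequality is monotonicity along `f ⊆ 𝒞_d f`. -/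

theorem nonneg_of_triangle {d : X → X → ℝ} (hrefl : ∀ x, d x x = 0)
    (hsymm : ∀ x y, d x y = d y x) (htri : ∀ x y z, d x z ≤ d x y + d y z) (x y : X) :
    0 ≤ d x y := by
  linarith [htri x y x, hrefl x, hsymm y x]

section chainBound

variable {d : X → X → ℝ}

theorem chainBound_nonneg (hd : ∀ x y, 0 ≤ d x y) :
    ∀ (c : List (X × X)) (x y : X), 0 ≤ chainBound d x y c
  | [], x, y => hd x y
  | _ :: t, _, y => le_max_of_le_right (chainBound_nonneg hd t _ y)

theorem chainBound_le_dist_add (hd : ∀ x y, 0 ≤ d x y)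
    (htri : ∀ x y z, d x z ≤ d x y + d y z) (c : List (X × X)) (x y z : X) :
    chainBound d x y c ≤ d x z + chainBound d z y c := by
  cases c with
  | nil => exact htri x z y
  | cons p t =>
    simp only [chainBound]
    exact max_le ((htri x z p.1).trans (add_le_add_right (le_max_left _ _) _))
      (le_add_of_nonneg_of_le (hd x z) (le_max_right _ _))

theorem chainBound_append_le_add (hd : ∀ x y, 0 ≤ d x y)
    (htri : ∀ x y z, d x z ≤ d x y + d y z) (s e : List (X × X)) (x y z : X) :
    chainBound d x y (s ++ e) ≤ chainBound d x z s + chainBound d z y e := by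
  induction s generalizing x with
  | nil => exact chainBound_le_dist_add hd htri e x y z
  | cons p t ih =>
    simp only [List.cons_append, chainBound]
    exact max_le
      (le_add_of_le_of_nonneg (le_max_left _ _) (chainBound_nonneg hd e z y))
      ((ih p.2).trans (add_le_add_left (le_max_right _ _) _))

theorem chainBound_replace_head_le (hd : ∀ x y, 0 ≤ d x y)
    (htri : ∀ x y z, d x z ≤ d x y + d y z) (p q : X × X) (s e : List (X × X)) (x y : X) :
    chainBound d x y ((q :: s) ++ e) ≤
      chainBound d x y (p :: e) + chainBound d p.1 p.2 (q :: s) := by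
  simp only [List.cons_append, chainBound]
  apply max_le
  · calc d x q.1 ≤ d x p.1 + d p.1 q.1 := htri x p.1 q.1
      _ ≤ _ := add_le_add (le_max_left _ _) (le_max_left _ _)
  · calc chainBound d q.2 y (s ++ e) ≤ chainBound d q.2 p.2 s + chainBound d p.2 y e :=
          chainBound_append_le_add hd htri s e q.2 y p.2
      _ ≤ _ := by
          rw [add_comm]
          exact add_le_add (le_max_right _ _) (le_max_right _ _)

end chainBound

section mbar

variable {d : X → X → ℝ} {f g : Set (X × X)} {x y : X}

theorem mbar_le_chainBound (hd : ∀ x y, 0 ≤ d x y) {c : List (X × X)} (hc : c ≠ [])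
    (hcf : ∀ p ∈ c, p ∈ f) : mbar d f x y ≤ chainBound d x y c :=
  csInf_le ⟨0, by rintro _ ⟨c, -, -, rfl⟩; exact chainBound_nonneg hd c x y⟩ ⟨c, hc, hcf, rfl⟩

theorem mbar_nonneg (hd : ∀ x y, 0 ≤ d x y) : 0 ≤ mbar d f x y :=
  Real.sInf_nonneg (by rintro _ ⟨c, -, -, rfl⟩; exact chainBound_nonneg hd c x y)

theorem le_mbar (hf : f.Nonempty) {r : ℝ}
    (h : ∀ c : List (X × X), c ≠ [] → (∀ p ∈ c, p ∈ f) → r ≤ chainBound d x y c) :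
    r ≤ mbar d f x y := by
  obtain ⟨p, hp⟩ := hf
  exact le_csInf ⟨_, [p], List.cons_ne_nil p [], by simpa using hp, rfl⟩
    (by rintro _ ⟨c, hc, hcf, rfl⟩; exact h c hc hcf)

theorem exists_chainBound_lt_of_mbar_lt (hf : f.Nonempty) {ε : ℝ} (h : mbar d f x y < ε) :
    ∃ c : List (X × X), c ≠ [] ∧ (∀ p ∈ c, p ∈ f) ∧ chainBound d x y c < ε := by
  by_contra! hge
  exact (le_mbar hf hge).not_gt h

theorem mbar_antitone (hd : ∀ x y, 0 ≤ d x y) (hf : f.Nonempty) (hfg : f ⊆ g) :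
    mbar d g x y ≤ mbar d f x y :=
  le_mbar hf fun _ hc hcf => mbar_le_chainBound hd hc fun p hp => hfg (hcf p hp)

theorem mbar_empty : mbar d ∅ x y = 0 := by
  refine (congrArg sInf (Set.eq_empty_iff_forall_notMem.2 ?_)).trans Real.sInf_empty
  rintro _ ⟨c, hc, hcf, -⟩
  obtain ⟨p, _, rfl⟩ := List.exists_cons_of_ne_nil hc
  exact hcf p List.mem_cons_self

theorem mbar_eq_zero_of_mem (hd : ∀ x y, 0 ≤ d x y) (hrefl : ∀ x, d x x = 0) {p : X × X}
    (hp : p ∈ f) : mbar d f p.1 p.2 = 0 := by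
  refine le_antisymm ?_ (mbar_nonneg hd)
  have h := mbar_le_chainBound (x := p.1) (y := p.2) hd (List.cons_ne_nil p [])
    (by simpa using hp)
  simpa [chainBound, hrefl] using h

end mbar

section conleyRel

variable {d : X → X → ℝ} {f : Set (X × X)}

theorem subset_conleyRel (hd : ∀ x y, 0 ≤ d x y) (hrefl : ∀ x, d x x = 0) :
    f ⊆ conleyRel d f :=
  fun _ hp => mbar_eq_zero_of_mem hd hrefl hp

theorem conleyRel_empty : conleyRel d ∅ = Set.univ :=
  Set.eq_univ_of_forall fun _ => mbar_empty

theorem exists_refining_chain (hd : ∀ x y, 0 ≤ d x y) (htri : ∀ x y z, d x z ≤ d x y + d y z)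
    (hf : f.Nonempty) (c : List (X × X)) (hc : ∀ p ∈ c, p ∈ conleyRel d f) {ε : ℝ}
    (hε : 0 < ε) : ∃ e : List (X × X), (c ≠ [] → e ≠ []) ∧ (∀ p ∈ e, p ∈ f) ∧
      ∀ x y, chainBound d x y e ≤ chainBound d x y c + ε := by
  induction c generalizing ε with
  | nil => exact ⟨[], fun h => h, by simp, fun x y => by simp [chainBound, hε.le]⟩
  | cons p t ih =>
    have hp : mbar d f p.1 p.2 < ε / 2 := by
      rw [show mbar d f p.1 p.2 = 0 from hc p List.mem_cons_self]; positivity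
    obtain ⟨_ | ⟨q, s⟩, hne, hlink, hlink_lt⟩ := exists_chainBound_lt_of_mbar_lt hf hp
    · contradiction
    obtain ⟨e, -, he, htail⟩ :=
      ih (fun r hr => hc r (List.mem_cons_of_mem p hr)) (half_pos hε)
    refine ⟨(q :: s) ++ e, by simp, ?_, fun x y => ?_⟩
    · simpa only [List.mem_append, or_imp, forall_and] using ⟨hlink, he⟩
    calc chainBound d x y ((q :: s) ++ e)
        ≤ chainBound d x y (p :: e) + chainBound d p.1 p.2 (q :: s) :=
          chainBound_replace_head_le hd htri p q s e x y
      _ ≤ max (d x p.1) (chainBound d p.2 y t + ε / 2) + ε / 2 :=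
          add_le_add (max_le_max_left _ (htail p.2 y)) hlink_lt.le
      _ ≤ chainBound d x y (p :: t) + ε / 2 + ε / 2 := by
          simp only [chainBound]
          gcongr
          exact max_le (le_add_of_le_of_nonneg (le_max_left _ _) (half_pos hε).le)
            (add_le_add_left (le_max_right _ _) _)
      _ = chainBound d x y (p :: t) + ε := by ring

theorem mbar_le_mbar_conleyRel (hd : ∀ x y, 0 ≤ d x y) (hrefl : ∀ x, d x x = 0)
    (htri : ∀ x y z, d x z ≤ d x y + d y z) (x y : X) :
    mbar d f x y ≤ mbar d (conleyRel d f) x y := by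
  rcases f.eq_empty_or_nonempty with rfl | hf
  · exact mbar_empty.trans_le (mbar_nonneg hd)
  refine le_mbar (hf.mono (subset_conleyRel hd hrefl)) fun c hc hcf =>
    le_of_forall_pos_le_add fun ε hε => ?_
  obtain ⟨e, he, hef, hbound⟩ := exists_refining_chain hd htri hf c hcf hε
  exact (mbar_le_chainBound hd (he hc) hef).trans (hbound x y)

theorem mbar_conleyRel (hd : ∀ x y, 0 ≤ d x y) (hrefl : ∀ x, d x x = 0)
    (htri : ∀ x y z, d x z ≤ d x y + d y z) (x y : X) :
    mbar d (conleyRel d f) x y = mbar d f x y := by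
  refine le_antisymm ?_ (mbar_le_mbar_conleyRel hd hrefl htri x y)
  rcases f.eq_empty_or_nonempty with rfl | hf
  · rw [conleyRel_empty, mbar_empty]
    exact (mbar_eq_zero_of_mem (p := (x, y)) hd hrefl (Set.mem_univ _)).le
  · exact mbar_antitone hd hf (subset_conleyRel hd hrefl)

end conleyRel

theorem conley_idempotent_general (d : X → X → ℝ) (f : Set (X × X))
    (hrefl : ∀ x, d x x = 0) (hsymm : ∀ x y, d x y = d y x)
    (htri : ∀ x y z, d x z ≤ d x y + d y z)
    :
    (∀ x y, mbar d (conleyRel d f) x y = mbar d f x y) ∧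
    conleyRel d (conleyRel d f) = conleyRel d f := by
  have hd := nonneg_of_triangle hrefl hsymm htri
  refine ⟨mbar_conleyRel hd hrefl htri, ?_⟩
  ext p
  change mbar d (conleyRel d f) p.1 p.2 = 0 ↔ mbar d f p.1 p.2 = 0
  rw [mbar_conleyRel hd hrefl htri]

theorem conley_idempotent [Nonempty X] (d : X → X → ℝ) (f : Set (X × X))
    (hrefl : ∀ x, d x x = 0) (hsymm : ∀ x y, d x y = d y x)
    (htri : ∀ x y z, d x z ≤ d x y + d y z)
    (hbdd : ∃ C, ∀ x y, d x y ≤ C)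
    :
    (∀ x y, mbar d (conleyRel d f) x y = mbar d f x y) ∧
    conleyRel d (conleyRel d f) = conleyRel d f :=
  conley_idempotent_general d f hrefl hsymm htri

end ChainRec
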